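/- In the massive graviton model with d_Q h_{μν} = −(i/2)(∂_μ u_ν + ∂_ν u_μ − η_{μν} ∂_ρ u^ρ), d_Q u_μ = 0, d_Q ũ_μ = i(∂^ν h_{μν} + m v_μ), d_Q v_μ = −(i m/2) u_μ, and Klein–Gordon equations (□ + m²) applied to all fields equal zero, the derivation d_Q is nilpotent on each generator. -/

import Mathlib

open Complex

/-- Minkowski metric η = diag(1,−1,−1,−1), as complex scalars. -/
def ηc (μ ν : Fin 4) : ℂ := if μ = ν then (if μ = 0 then 1 else -1) else 0

/-! `d_Q h_{μν}` and `d_Q v_μ` are linear in the derivatives of the ghost `u`, and `d_Q u = 0`, so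
`d_Q²` kills `h`, `v`, `u`. On the antighost, `d_Q² ũ_μ` is the divergence of the gauge variation
`∂_μ u_ν + ∂_ν u_μ − η_{μν} ∂·u` plus a mass term. Because `η` is symmetric with `η² = 1`, the two
`∂_μ ∂·u` contributions cancel and that divergence is `□ u_μ`; hence `d_Q² ũ_μ = ½ (□ + m²) u_μ`,
which vanishes by the Klein–Gordon equation for `u`. -/

theorem ηc_symm (μ ν : Fin 4) : ηc μ ν = ηc ν μ := by
  unfold ηc
  split_ifs <;> simp_all

theorem sum_ηc_mul_ηc (μ α : Fin 4) :
    ∑ ν : Fin 4, ηc μ ν * ηc ν α = if μ = α then 1 else 0 := by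
  fin_cases μ <;> fin_cases α <;> simp [ηc]

section GaugeVariation

variable {ι R 𝒜 : Type*} [Fintype ι] [CommRing R] [AddCommGroup 𝒜] [Module R 𝒜]

def gaugeVariation (g : ι → ι → R) (pd : ι → 𝒜 →ₗ[R] 𝒜) (u : ι → 𝒜) (μ ν : ι) : 𝒜 :=
  pd μ (u ν) + pd ν (u μ) - g μ ν • ∑ ρ, ∑ σ, g ρ σ • pd ρ (u σ)

theorem divergence_gaugeVariation [DecidableEq ι] {g : ι → ι → R} {pd : ι → 𝒜 →ₗ[R] 𝒜}
    (hg : ∀ μ ν, g μ ν = g ν μ) (hgg : ∀ μ α, ∑ ν, g μ ν * g ν α = if μ = α then 1 else 0)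
    (hpd : ∀ μ ν x, pd μ (pd ν x) = pd ν (pd μ x)) (u : ι → 𝒜) (μ : ι) :
    ∑ ν, ∑ α, g ν α • pd α (gaugeVariation g pd u μ ν)
      = ∑ α, ∑ β, g α β • pd α (pd β (u μ)) := by
  unfold gaugeVariation
  set D := ∑ ρ, ∑ σ, g ρ σ • pd ρ (u σ)
  have grad_div : ∑ ν, ∑ α, g ν α • pd α (pd μ (u ν)) = pd μ D := by
    rw [Finset.sum_comm]
    simp only [D, map_sum, map_smul, hpd μ, hg]
  have box : ∑ ν, ∑ α, g ν α • pd α (pd ν (u μ)) = ∑ α, ∑ β, g α β • pd α (pd β (u μ)) := by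
    refine Finset.sum_congr rfl fun ν _ ↦ Finset.sum_congr rfl fun α _ ↦ ?_
    rw [hpd]
  have trace : ∑ ν, ∑ α, g ν α • pd α (g μ ν • D) = pd μ D := by
    simp only [map_smul, smul_smul]
    rw [Finset.sum_comm]
    simp only [← Finset.sum_smul, mul_comm (g _ _) (g μ _), hgg, ite_smul, one_smul, zero_smul,
      Finset.sum_ite_eq, Finset.mem_univ, if_true]
  simp only [map_add, map_sub, smul_add, smul_sub, Finset.sum_add_distrib,
    Finset.sum_sub_distrib, grad_div, box, trace]
  abel

theorem map_gaugeVariation_eq_zero {g : ι → ι → R} {pd : ι → 𝒜 →ₗ[R] 𝒜} {dQ : 𝒜 →ₗ[R] 𝒜}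
    (hcomm : ∀ μ x, dQ (pd μ x) = pd μ (dQ x)) {u : ι → 𝒜} (hdQu : ∀ μ, dQ (u μ) = 0)
    (μ ν : ι) : dQ (gaugeVariation g pd u μ ν) = 0 := by
  simp [gaugeVariation, hcomm, hdQu]

end GaugeVariation

theorem dQ_dQ_antighost_eq_half_kleinGordon {ι 𝒜 : Type*} [Fintype ι] [DecidableEq ι] [AddCommGroup 𝒜] [Module ℂ 𝒜]
    {g : ι → ι → ℂ} {pd : ι → 𝒜 →ₗ[ℂ] 𝒜} {dQ : 𝒜 →ₗ[ℂ] 𝒜}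
    (hg : ∀ μ ν, g μ ν = g ν μ) (hgg : ∀ μ α, ∑ ν, g μ ν * g ν α = if μ = α then 1 else 0)
    (hpd : ∀ μ ν x, pd μ (pd ν x) = pd ν (pd μ x)) (hcomm : ∀ μ x, dQ (pd μ x) = pd μ (dQ x))
    {h : ι → ι → 𝒜} {v u ut : ι → 𝒜} {m : ℂ}
    (hdQh : ∀ μ ν, dQ (h μ ν) = (-(I / 2)) • gaugeVariation g pd u μ ν)
    (hdQut : ∀ μ, dQ (ut μ) = I • ((∑ ν, ∑ α, g ν α • pd α (h μ ν)) + m • v μ))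
    (hdQv : ∀ μ, dQ (v μ) = (-(I * m / 2)) • u μ) (μ : ι) :
    dQ (dQ (ut μ)) = (1 / 2 : ℂ) • ((∑ α, ∑ β, g α β • pd α (pd β (u μ))) + m ^ 2 • u μ) := by
  have div_dQh : ∑ ν, ∑ α, g ν α • pd α (dQ (h μ ν))
      = (-(I / 2)) • ∑ α, ∑ β, g α β • pd α (pd β (u μ)) := by
    simp only [hdQh, map_smul, smul_comm (g _ _) (-(I / 2)), ← Finset.smul_sum,
      divergence_gaugeVariation hg hgg hpd]
  rw [hdQut, map_smul, map_add, map_smul, hdQv]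
  simp only [map_sum, map_smul, hcomm, div_dQh]
  linear_combination (norm := module)
    I_sq • (-(1 / 2 : ℂ) • ∑ α, ∑ β, g α β • pd α (pd β (u μ)) - (m ^ 2 / 2) • u μ)

theorem dQ_nilpotent_massive_graviton_general
    (𝒜 : Type*) [AddCommGroup 𝒜] [Module ℂ 𝒜]
    (pd : Fin 4 → 𝒜 →ₗ[ℂ] 𝒜) (dQ : 𝒜 →ₗ[ℂ] 𝒜)
    (m : ℝ)
    (hpd : ∀ μ ν, pd μ ∘ₗ pd ν = pd ν ∘ₗ pd μ)
    (hcomm : ∀ μ, dQ ∘ₗ pd μ = pd μ ∘ₗ dQ)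
    (h : Fin 4 → Fin 4 → 𝒜) (v u ut : Fin 4 → 𝒜)
    (hdQh : ∀ μ ν, dQ (h μ ν) = (-(Complex.I/2)) •
      (pd μ (u ν) + pd ν (u μ)
        - ηc μ ν • ∑ ρ : Fin 4, ∑ σ : Fin 4, ηc ρ σ • pd ρ (u σ)))
    (hdQu : ∀ μ, dQ (u μ) = 0)
    (hdQut : ∀ μ, dQ (ut μ) = Complex.I •
      ((∑ ν : Fin 4, ∑ α : Fin 4, ηc ν α • pd α (h μ ν)) + (m : ℂ) • v μ))
    (hdQv : ∀ μ, dQ (v μ) = (-(Complex.I * (m : ℂ)/2)) • u μ)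
    (hKGu : ∀ μ, (∑ α : Fin 4, ∑ β : Fin 4, ηc α β • pd α (pd β (u μ)))
      + ((m : ℂ)^2) • u μ = 0) :
    (∀ μ ν, dQ (dQ (h μ ν)) = 0) ∧ (∀ μ, dQ (dQ (v μ)) = 0)
      ∧ (∀ μ, dQ (dQ (u μ)) = 0) ∧ (∀ μ, dQ (dQ (ut μ)) = 0) := by
  have hcomm' (μ : Fin 4) (x : 𝒜) : dQ (pd μ x) = pd μ (dQ x) := LinearMap.congr_fun (hcomm μ) x
  have hpd' (μ ν : Fin 4) (x : 𝒜) : pd μ (pd ν x) = pd ν (pd μ x) := LinearMap.congr_fun (hpd μ ν) x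
  refine ⟨fun μ ν ↦ ?_, fun μ ↦ ?_, fun μ ↦ by rw [hdQu, map_zero], fun μ ↦ ?_⟩
  · rw [hdQh, map_smul]
    exact smul_eq_zero_of_right _ (map_gaugeVariation_eq_zero hcomm' hdQu μ ν)
  · rw [hdQv, map_smul, hdQu, smul_zero]
  · rw [dQ_dQ_antighost_eq_half_kleinGordon ηc_symm sum_ηc_mul_ηc hpd' hcomm' hdQh hdQut hdQv, hKGu, smul_zero]

/-- in the massive graviton model with
d_Q h_{μν} = −(i/2)(∂_μ u_ν + ∂_ν u_μ − η_{μν} ∂_ρ u^ρ), d_Q u_μ = 0,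
d_Q ũ_μ = i(∂^ν h_{μν} + m v_μ), d_Q v_μ = −(im/2) u_μ and Klein–Gordon
equations (□ + m²)X = 0 for all generators X, d_Q is nilpotent on each
generator. -/
theorem dQ_nilpotent_massive_graviton
    (𝒜 : Type*) [AddCommGroup 𝒜] [Module ℂ 𝒜]
    (pd : Fin 4 → 𝒜 →ₗ[ℂ] 𝒜) (dQ : 𝒜 →ₗ[ℂ] 𝒜)
    (m : ℝ) (hm : 0 < m)
    (hpd : ∀ μ ν, pd μ ∘ₗ pd ν = pd ν ∘ₗ pd μ)
    (hcomm : ∀ μ, dQ ∘ₗ pd μ = pd μ ∘ₗ dQ)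
    (h : Fin 4 → Fin 4 → 𝒜) (v u ut : Fin 4 → 𝒜)
    (hsymm : ∀ μ ν, h μ ν = h ν μ)
    (hdQh : ∀ μ ν, dQ (h μ ν) = (-(Complex.I/2)) •
      (pd μ (u ν) + pd ν (u μ)
        - ηc μ ν • ∑ ρ : Fin 4, ∑ σ : Fin 4, ηc ρ σ • pd ρ (u σ)))
    (hdQu : ∀ μ, dQ (u μ) = 0)
    (hdQut : ∀ μ, dQ (ut μ) = Complex.I •
      ((∑ ν : Fin 4, ∑ α : Fin 4, ηc ν α • pd α (h μ ν)) + (m : ℂ) • v μ))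
    (hdQv : ∀ μ, dQ (v μ) = (-(Complex.I * (m : ℂ)/2)) • u μ)
    (hKGh : ∀ μ ν, (∑ α : Fin 4, ∑ β : Fin 4, ηc α β • pd α (pd β (h μ ν)))
      + ((m : ℂ)^2) • h μ ν = 0)
    (hKGv : ∀ μ, (∑ α : Fin 4, ∑ β : Fin 4, ηc α β • pd α (pd β (v μ)))
      + ((m : ℂ)^2) • v μ = 0)
    (hKGu : ∀ μ, (∑ α : Fin 4, ∑ β : Fin 4, ηc α β • pd α (pd β (u μ)))
      + ((m : ℂ)^2) • u μ = 0)
    (hKGut : ∀ μ, (∑ α : Fin 4, ∑ β : Fin 4, ηc α β • pd α (pd β (ut μ)))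
      + ((m : ℂ)^2) • ut μ = 0) :
    (∀ μ ν, dQ (dQ (h μ ν)) = 0) ∧ (∀ μ, dQ (dQ (v μ)) = 0)
      ∧ (∀ μ, dQ (dQ (u μ)) = 0) ∧ (∀ μ, dQ (dQ (ut μ)) = 0) :=
  dQ_nilpotent_massive_graviton_general 𝒜 pd dQ m hpd hcomm h v u ut hdQh hdQu hdQut hdQv hKGu
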